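/- The natural parameterization r : ℝ → S_X has the following properties: (1) r(s+L) = −r(s) for every s ∈ ℝ; (2) the one-sided derivatives r'₋(s) and r'₊(s) exist at every s ∈ ℝ; (3) the set {s ∈ ℝ : r'₋(s) ≠ r'₊(s)} is at most countable; (4) r is non-expanding (‖r(s) − r(s')‖ ≤ |s − s'| for all s, s' ∈ ℝ) and ‖r'₋(s)‖ = ‖r'₊(s)‖ = 1 for every s ∈ ℝ. -/

import Mathlib

open Set Filter Topology Asymptotics Real MeasureTheory

/-!
Near any `t₀`, the norm along the ellipse `e^{it}` factors as
`‖e^{i(t₀ + θ)}‖ = cos θ · g (tan θ)`, where `g u = ‖e^{it₀} + u · ie^{it₀}‖` is convex.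
Convex functions of one variable have one-sided derivatives everywhere, the right derivative is
right-continuous with left limit the left derivative, and the two differ at countably many points;
through the factorization, `t ↦ ‖e^{it}‖`, and hence `p = e^{it} / ‖e^{it}‖`, inherit all of this.
The one-sided derivatives of `p` never vanish, since `e^{it}` and `ie^{it}` are independent.
So `σ = ∫ ‖p'₊‖` has one-sided derivatives `‖p'₋‖` and `‖p'₊‖`, its inverse `τ` rescales the
one-sided derivatives of `r = p ∘ τ` to unit length, and the mean value inequality
`‖p b - p a‖ ≤ σ b - σ a` makes `r` non-expanding. Finally `p (t + π) = -p t` gives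
`σ (t + π) = σ t + L`, hence `τ (s + L) = τ s + π`.
-/

theorem HasDerivWithinAt.of_leftInverse {σ τ : ℝ → ℝ} {S T : Set ℝ} {s d : ℝ}
    (hσ : HasDerivWithinAt σ d S (τ s)) (hd : d ≠ 0) (hτ : ContinuousWithinAt τ T s)
    (hmaps : MapsTo τ (T \ {s}) (S \ {τ s})) (hστ : Function.LeftInverse σ τ) :
    HasDerivWithinAt τ d⁻¹ T s := by
  rw [hasDerivWithinAt_iff_tendsto_slope] at hσ ⊢
  have hτ' : Tendsto τ (𝓝[T \ {s}] s) (𝓝[S \ {τ s}] (τ s)) :=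
    tendsto_nhdsWithin_iff.2 ⟨(hτ.mono sdiff_subset).tendsto,
      eventually_mem_nhdsWithin.mono fun x hx ↦ hmaps hx⟩
  refine ((hσ.comp hτ').inv₀ hd).congr fun x ↦ ?_
  simp only [Function.comp_apply, slope_def_field, hστ x, hστ s, inv_div]

theorem Function.Antiperiodic.derivWithin_Ici {E : Type*} [NormedAddCommGroup E]
    [NormedSpace ℝ E] {f : ℝ → E} {c : ℝ} (hf : Function.Antiperiodic f c) {t : ℝ}
    (hd : DifferentiableWithinAt ℝ f (Ici (t + c)) (t + c)) :
    derivWithin f (Ici (t + c)) (t + c) = -derivWithin f (Ici t) t := by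
  have h : HasDerivWithinAt (f ∘ (· + c)) ((1 : ℝ) • derivWithin f (Ici (t + c)) (t + c))
      (Ici t) t :=
    hd.hasDerivWithinAt.scomp t ((hasDerivAt_id' t).add_const c).hasDerivWithinAt
      fun _ hx ↦ add_le_add_left hx c
  rw [one_smul, show f ∘ (· + c) = fun x ↦ -f x from funext hf] at h
  rw [← h.derivWithin (uniqueDiffWithinAt_Ici t), derivWithin.fun_neg]

theorem tendsto_tan_sub_nhdsGT (t₀ : ℝ) : Tendsto (fun x ↦ tan (x - t₀)) (𝓝[>] t₀) (𝓝[>] 0) := by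
  have hcont : ContinuousAt (fun x ↦ tan (x - t₀)) t₀ :=
    (continuousAt_tan.2 (by simp)).comp (continuousAt_id.sub continuousAt_const)
  refine tendsto_nhdsWithin_of_tendsto_nhds_of_eventually_within _ ?_ ?_
  · simpa using hcont.tendsto.mono_left nhdsWithin_le_nhds
  · filter_upwards [Ioo_mem_nhdsGT (by linarith [pi_pos] : t₀ < t₀ + π / 2)] with x hx
    exact tan_pos_of_pos_of_lt_pi_div_two (by linarith [hx.1]) (by linarith [hx.2])

theorem tendsto_tan_sub_nhdsLT (t₀ : ℝ) : Tendsto (fun x ↦ tan (x - t₀)) (𝓝[<] t₀) (𝓝[<] 0) := by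
  have hcont : ContinuousAt (fun x ↦ tan (x - t₀)) t₀ :=
    (continuousAt_tan.2 (by simp)).comp (continuousAt_id.sub continuousAt_const)
  refine tendsto_nhdsWithin_of_tendsto_nhds_of_eventually_within _ ?_ ?_
  · simpa using hcont.tendsto.mono_left nhdsWithin_le_nhds
  · filter_upwards [Ioo_mem_nhdsLT (by linarith [pi_pos] : t₀ - π / 2 < t₀)] with x hx
    exact tan_neg_of_neg_of_pi_div_two_lt (by linarith [hx.2]) (by linarith [hx.1])

namespace ConvexOn

variable {S : Set ℝ} {f : ℝ → ℝ} {x : ℝ}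

theorem tendsto_rightDeriv_nhdsGT (hf : ConvexOn ℝ S f) (hx : x ∈ interior S) :
    Tendsto (fun y ↦ derivWithin f (Ioi y) y) (𝓝[>] x) (𝓝 (derivWithin f (Ioi x) x)) := by
  have hS : ∀ᶠ y in 𝓝[>] x, y ∈ interior S :=
    mem_nhdsWithin_of_mem_nhds (isOpen_interior.mem_nhds hx)
  have hderiv := hf.hasDerivWithinAt_rightDeriv_of_mem_interior hx
  refine tendsto_order.2 ⟨fun a ha ↦ ?_, fun a ha ↦ ?_⟩
  · filter_upwards [hS, self_mem_nhdsWithin] with y hy hxy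
    exact ha.trans_le (hf.monotoneOn_rightDeriv hx hy (le_of_lt hxy))
  · obtain ⟨z, hz, hzS, hxz⟩ := (((hasDerivWithinAt_iff_tendsto_slope' self_notMem_Ioi).1
      hderiv).eventually (gt_mem_nhds ha) |>.and (hS.and self_mem_nhdsWithin)).exists
    have hslope : Tendsto (fun y ↦ slope f y z) (𝓝[>] x) (𝓝 (slope f x z)) := by
      simp_rw [slope_def_field]
      exact (tendsto_const_nhds.sub hderiv.continuousWithinAt).div
        (tendsto_const_nhds.sub (tendsto_id.mono_left nhdsWithin_le_nhds)) (sub_ne_zero.2 hxz.ne')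
    filter_upwards [hslope.eventually (gt_mem_nhds hz), hS, Ioo_mem_nhdsGT hxz] with y hyz hy hy'
    exact (hf.rightDeriv_le_slope_of_mem_interior hy (interior_subset hzS) hy'.2).trans_lt hyz

theorem tendsto_rightDeriv_nhdsLT (hf : ConvexOn ℝ S f) (hx : x ∈ interior S) :
    Tendsto (fun y ↦ derivWithin f (Ioi y) y) (𝓝[<] x) (𝓝 (derivWithin f (Iio x) x)) := by
  have hS : ∀ᶠ y in 𝓝[<] x, y ∈ interior S :=
    mem_nhdsWithin_of_mem_nhds (isOpen_interior.mem_nhds hx)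
  have hderiv := hf.hasDerivWithinAt_leftDeriv_of_mem_interior hx
  refine tendsto_order.2 ⟨fun a ha ↦ ?_, fun a ha ↦ ?_⟩
  · obtain ⟨z, hz, hzS, hzx⟩ := (((hasDerivWithinAt_iff_tendsto_slope' self_notMem_Iio).1
      hderiv).eventually (lt_mem_nhds ha) |>.and (hS.and self_mem_nhdsWithin)).exists
    have hslope : Tendsto (fun y ↦ slope f z y) (𝓝[<] x) (𝓝 (slope f x z)) := by
      simp_rw [slope_comm f x z, slope_def_field]
      exact (hderiv.continuousWithinAt.sub tendsto_const_nhds).div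
        ((tendsto_id.mono_left nhdsWithin_le_nhds).sub tendsto_const_nhds) (sub_ne_zero.2 hzx.ne')
    filter_upwards [hslope.eventually (lt_mem_nhds hz), hS, Ioo_mem_nhdsLT hzx] with y hzy hy hy'
    exact hzy.trans_le ((hf.slope_le_leftDeriv_of_mem_interior (interior_subset hzS) hy hy'.1).trans
      (hf.leftDeriv_le_rightDeriv_of_mem_interior hy))
  · filter_upwards [hS, self_mem_nhdsWithin] with y hy hyx
    exact ((hf.rightDeriv_le_slope_of_mem_interior hy (interior_subset hx) hyx).trans
      (hf.slope_le_leftDeriv_of_mem_interior (interior_subset hy) hx hyx)).trans_lt ha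

theorem countable_leftDeriv_ne_rightDeriv (hf : ConvexOn ℝ S f) :
    {x ∈ interior S | derivWithin f (Iio x) x ≠ derivWithin f (Ioi x) x}.Countable := by
  refine hf.monotoneOn_rightDeriv.countable_not_continuousWithinAt.mono ?_
  rintro x ⟨hx, hne⟩
  refine ⟨hx, fun hcont ↦ hne ?_⟩
  exact tendsto_nhds_unique (hf.tendsto_rightDeriv_nhdsLT hx)
    ((hcont.continuousAt (isOpen_interior.mem_nhds hx)).tendsto.mono_left nhdsWithin_le_nhds)

end ConvexOn

section

variable {E : Type*} [NormedAddCommGroup E] [NormedSpace ℝ E]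

theorem convexOn_norm_add_smul (v w : E) : ConvexOn ℝ univ (fun u : ℝ ↦ ‖v + u • w‖) := by
  have h := convexOn_univ_norm.comp_affineMap (AffineMap.lineMap (k := ℝ) v (v + w))
  refine h.congr fun u _ ↦ ?_
  simp [AffineMap.lineMap_apply, add_comm]

theorem HasDerivAt.hasDerivWithinAt_norm_of_line {γ : ℝ → E} {w : E} {t d : ℝ} {s : Set ℝ}
    (hγ : HasDerivAt γ w t) (h : HasDerivWithinAt (fun x ↦ ‖γ t + (x - t) • w‖) d s t) :
    HasDerivWithinAt (‖γ ·‖) d s t := by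
  have hrem : (fun x ↦ ‖γ x‖ - ‖γ t + (x - t) • w‖) =o[𝓝[s] t] (· - t) := by
    refine IsBigO.trans_isLittleO (IsBigO.of_bound 1 (Eventually.of_forall fun x ↦ ?_))
      (hγ.hasDerivWithinAt (s := s)).isLittleO
    rw [one_mul, Real.norm_eq_abs]
    refine (abs_norm_sub_norm_le _ _).trans_eq ?_
    congr 1
    abel
  refine .of_isLittleO ((h.isLittleO.add hrem).congr_left fun x ↦ ?_)
  simp only [sub_self, zero_smul, add_zero]
  ring

theorem abs_le_norm_of_hasDerivWithinAt_norm {γ : ℝ → E} {w : E} {t d : ℝ}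
    (hγ : HasDerivAt γ w t) (h : HasDerivWithinAt (‖γ ·‖) d (Ioi t) t) : |d| ≤ ‖w‖ := by
  have hN := (hasDerivWithinAt_iff_tendsto_slope' self_notMem_Ioi).1 h
  have hγ' := (hasDerivAt_iff_tendsto_slope.1 hγ).mono_left
    (nhdsWithin_mono t fun _ hx ↦ ne_of_gt hx)
  refine le_of_tendsto_of_tendsto' hN.abs hγ'.norm fun x ↦ ?_
  rw [slope_def_field, slope_def_module, abs_div, norm_smul, Real.norm_eq_abs, abs_inv,
    div_eq_inv_mul]
  gcongr
  exact abs_norm_sub_norm_le _ _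

structure IsOneSidedRegularCurve (f : ℝ → E) : Prop where
  differentiableWithinAt_Ici (t : ℝ) : DifferentiableWithinAt ℝ f (Ici t) t
  differentiableWithinAt_Iic (t : ℝ) : DifferentiableWithinAt ℝ f (Iic t) t
  derivWithin_Ici_ne_zero (t : ℝ) : derivWithin f (Ici t) t ≠ 0
  derivWithin_Iic_ne_zero (t : ℝ) : derivWithin f (Iic t) t ≠ 0
  tendsto_derivWithin_Ici_nhdsGT (t : ℝ) :
    Tendsto (fun x ↦ derivWithin f (Ici x) x) (𝓝[>] t) (𝓝 (derivWithin f (Ici t) t))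
  tendsto_derivWithin_Ici_nhdsLT (t : ℝ) :
    Tendsto (fun x ↦ derivWithin f (Ici x) x) (𝓝[<] t) (𝓝 (derivWithin f (Iic t) t))
  intervalIntegrable (a b : ℝ) : IntervalIntegrable (fun x ↦ ‖derivWithin f (Ici x) x‖) volume a b

noncomputable def arcLength (f : ℝ → E) (t : ℝ) : ℝ :=
  ∫ u in (0 : ℝ)..t, ‖derivWithin f (Ici u) u‖

namespace IsOneSidedRegularCurve

variable {f : ℝ → E} (hf : IsOneSidedRegularCurve f)
include hf

theorem continuous : Continuous f :=
  continuous_iff_continuousAt.2 fun t ↦ continuousAt_iff_continuous_left_right.2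
    ⟨(hf.differentiableWithinAt_Iic t).continuousWithinAt,
      (hf.differentiableWithinAt_Ici t).continuousWithinAt⟩

theorem continuous_arcLength : Continuous (arcLength f) :=
  intervalIntegral.continuous_primitive hf.intervalIntegrable 0

theorem strictMono_arcLength : StrictMono (arcLength f) := fun a b hab ↦ by
  rw [← sub_pos, arcLength, arcLength, intervalIntegral.integral_interval_sub_left
    (hf.intervalIntegrable 0 b) (hf.intervalIntegrable 0 a)]
  exact intervalIntegral.intervalIntegral_pos_of_pos_on (hf.intervalIntegrable a b)
    (fun x _ ↦ norm_pos_iff.2 (hf.derivWithin_Ici_ne_zero x)) hab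

theorem arcLength_add_of_antiperiodic {c : ℝ} (hc : Function.Antiperiodic f c) (t : ℝ) :
    arcLength f (t + c) = arcLength f t + arcLength f c := by
  have hper : Function.Periodic (fun x ↦ ‖derivWithin f (Ici x) x‖) c := fun x ↦ by
    simp only [hc.derivWithin_Ici (hf.differentiableWithinAt_Ici _), norm_neg]
  simpa [arcLength] using hper.intervalIntegral_add_eq_add 0 t hf.intervalIntegrable

variable [CompleteSpace E]

theorem hasDerivWithinAt_arcLength_Ici (t : ℝ) :
    HasDerivWithinAt (arcLength f) ‖derivWithin f (Ici t) t‖ (Ici t) t :=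
  intervalIntegral.integral_hasDerivWithinAt_right (hf.intervalIntegrable 0 t)
    (stronglyMeasurable_derivWithin_Ici f).norm.stronglyMeasurableAtFilter
    (hf.tendsto_derivWithin_Ici_nhdsGT t).norm

theorem hasDerivWithinAt_arcLength_Iic (t : ℝ) :
    HasDerivWithinAt (arcLength f) ‖derivWithin f (Iic t) t‖ (Iic t) t := by
  have hae : 𝓝[≤] t ⊓ ae volume ≤ 𝓝[<] t := calc
    _ ≤ 𝓝[≤] t ⊓ 𝓟 {t}ᶜ :=
      inf_le_inf_left _ (le_principal_iff.2 (compl_mem_ae_iff.2 (measure_singleton t)))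
    _ = 𝓝[<] t := by rw [nhdsWithin, inf_assoc, inf_principal, ← sdiff_eq, Iic_sdiff_right]; rfl
  exact intervalIntegral.integral_hasDerivWithinAt_of_tendsto_ae_right (hf.intervalIntegrable 0 t)
    (stronglyMeasurable_derivWithin_Ici f).norm.stronglyMeasurableAtFilter
    ((hf.tendsto_derivWithin_Ici_nhdsLT t).norm.mono_left hae)

theorem norm_sub_le_arcLength_sub {a b : ℝ} (hab : a ≤ b) :
    ‖f b - f a‖ ≤ arcLength f b - arcLength f a :=
  image_norm_le_of_norm_deriv_right_le_deriv_boundary' (f := (f · - f a))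
    (B := (arcLength f · - arcLength f a)) (hf.continuous.sub continuous_const).continuousOn
    (fun x _ ↦ (hf.differentiableWithinAt_Ici x).hasDerivWithinAt.sub_const _) (by simp)
    (hf.continuous_arcLength.sub continuous_const).continuousOn
    (fun x _ ↦ (hf.hasDerivWithinAt_arcLength_Ici x).sub_const _) (fun _ _ ↦ le_rfl)
    (right_mem_Icc.2 hab)

variable {τ : ℝ → ℝ} (hτ_mono : StrictMono τ) (hστ : Function.LeftInverse (arcLength f) τ)
include hτ_mono hστ

theorem lipschitzWith_comp : LipschitzWith 1 (f ∘ τ) := by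
  have key : ∀ {s s'}, s' ≤ s → ‖f (τ s) - f (τ s')‖ ≤ s - s' := fun h ↦ by
    simpa only [hστ _] using hf.norm_sub_le_arcLength_sub (hτ_mono.monotone h)
  refine LipschitzWith.of_dist_le_mul fun s s' ↦ ?_
  rw [NNReal.coe_one, one_mul, dist_eq_norm, Real.dist_eq]
  rcases le_total s' s with h | h
  · exact (key h).trans (le_abs_self _)
  · rw [norm_sub_rev, abs_sub_comm]; exact (key h).trans (le_abs_self _)

variable (hτ : Continuous τ)
include hτ

theorem hasDerivWithinAt_comp_Ici (s : ℝ) :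
    HasDerivWithinAt (f ∘ τ) (‖derivWithin f (Ici (τ s)) (τ s)‖⁻¹ • derivWithin f (Ici (τ s)) (τ s))
      (Ici s) s :=
  (hf.differentiableWithinAt_Ici (τ s)).hasDerivWithinAt.scomp s
    ((hf.hasDerivWithinAt_arcLength_Ici (τ s)).of_leftInverse
      (norm_ne_zero_iff.2 (hf.derivWithin_Ici_ne_zero _)) hτ.continuousWithinAt
      (fun _ hx ↦ ⟨hτ_mono.monotone hx.1, hτ_mono.injective.ne hx.2⟩) hστ)
    fun _ hx ↦ hτ_mono.monotone hx

theorem hasDerivWithinAt_comp_Iic (s : ℝ) :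
    HasDerivWithinAt (f ∘ τ) (‖derivWithin f (Iic (τ s)) (τ s)‖⁻¹ • derivWithin f (Iic (τ s)) (τ s))
      (Iic s) s :=
  (hf.differentiableWithinAt_Iic (τ s)).hasDerivWithinAt.scomp s
    ((hf.hasDerivWithinAt_arcLength_Iic (τ s)).of_leftInverse
      (norm_ne_zero_iff.2 (hf.derivWithin_Iic_ne_zero _)) hτ.continuousWithinAt
      (fun _ hx ↦ ⟨hτ_mono.monotone hx.1, hτ_mono.injective.ne hx.2⟩) hστ)
    fun _ hx ↦ hτ_mono.monotone hx

theorem norm_derivWithin_comp_Ici (s : ℝ) : ‖derivWithin (f ∘ τ) (Ici s) s‖ = 1 := by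
  rw [(hf.hasDerivWithinAt_comp_Ici hτ_mono hστ hτ s).derivWithin (uniqueDiffWithinAt_Ici s),
    norm_smul, norm_inv, norm_norm,
    inv_mul_cancel₀ (norm_ne_zero_iff.2 (hf.derivWithin_Ici_ne_zero _))]

theorem norm_derivWithin_comp_Iic (s : ℝ) : ‖derivWithin (f ∘ τ) (Iic s) s‖ = 1 := by
  rw [(hf.hasDerivWithinAt_comp_Iic hτ_mono hστ hτ s).derivWithin (uniqueDiffWithinAt_Iic s),
    norm_smul, norm_inv, norm_norm,
    inv_mul_cancel₀ (norm_ne_zero_iff.2 (hf.derivWithin_Iic_ne_zero _))]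

theorem countable_derivWithin_comp_Iic_ne_Ici
    (hc : {t | derivWithin f (Iic t) t ≠ derivWithin f (Ici t) t}.Countable) :
    {s | derivWithin (f ∘ τ) (Iic s) s ≠ derivWithin (f ∘ τ) (Ici s) s}.Countable := by
  refine (hc.image (arcLength f)).mono fun s hs ↦ (mem_image _ _ _).2
    ⟨τ s, show _ ≠ _ from fun heq ↦ hs ?_, hστ s⟩
  rw [(hf.hasDerivWithinAt_comp_Ici hτ_mono hστ hτ s).derivWithin (uniqueDiffWithinAt_Ici s),
    (hf.hasDerivWithinAt_comp_Iic hτ_mono hστ hτ s).derivWithin (uniqueDiffWithinAt_Iic s), heq]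

end IsOneSidedRegularCurve

/-- The point `e^{it}` of the paper. -/
noncomputable def ellipse (e₁ e₂ : E) (t : ℝ) : E := cos t • e₁ + sin t • e₂

section Ellipse

variable {e₁ e₂ : E}

theorem hasDerivAt_ellipse (t : ℝ) :
    HasDerivAt (ellipse e₁ e₂) (ellipse e₁ e₂ (t + π / 2)) t := by
  unfold ellipse
  rw [cos_add_pi_div_two, sin_add_pi_div_two]
  exact ((hasDerivAt_cos t).smul_const e₁).fun_add ((hasDerivAt_sin t).smul_const e₂)

theorem continuous_ellipse : Continuous (ellipse e₁ e₂) :=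
  continuous_iff_continuousAt.2 fun t ↦ (hasDerivAt_ellipse t).continuousAt

theorem ellipse_add (t θ : ℝ) :
    ellipse e₁ e₂ (t + θ) = cos θ • ellipse e₁ e₂ t + sin θ • ellipse e₁ e₂ (t + π / 2) := by
  simp only [ellipse, cos_add, sin_add, cos_pi_div_two, sin_pi_div_two]
  module

theorem ellipse_add_pi (t : ℝ) : ellipse e₁ e₂ (t + π) = -ellipse e₁ e₂ t := by
  rw [ellipse_add]
  simp

theorem linearIndependent_ellipse (hInd : LinearIndependent ℝ ![e₁, e₂]) (t : ℝ) :
    LinearIndependent ℝ ![ellipse e₁ e₂ t, ellipse e₁ e₂ (t + π / 2)] := by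
  rw [LinearIndependent.pair_iff] at hInd ⊢
  intro a b hab
  have h := hInd (a * cos t - b * sin t) (a * sin t + b * cos t) (by
    rw [← hab]; simp only [ellipse, cos_add_pi_div_two, sin_add_pi_div_two]; module)
  constructor
  · linear_combination cos t * h.1 + sin t * h.2 - a * sin_sq_add_cos_sq t
  · linear_combination cos t * h.2 - sin t * h.1 - b * sin_sq_add_cos_sq t

theorem ellipse_ne_zero (hInd : LinearIndependent ℝ ![e₁, e₂]) (t : ℝ) : ellipse e₁ e₂ t ≠ 0 :=
  (linearIndependent_ellipse hInd t).ne_zero 0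

theorem norm_ellipse_add_arctan (t₀ u : ℝ) :
    ‖ellipse e₁ e₂ (t₀ + arctan u)‖ =
      cos (arctan u) * ‖ellipse e₁ e₂ t₀ + u • ellipse e₁ e₂ (t₀ + π / 2)‖ := by
  have hsin : sin (arctan u) = cos (arctan u) * u := by
    rw [sin_arctan, cos_arctan]
    ring
  rw [ellipse_add, hsin, mul_smul, ← smul_add, norm_smul, Real.norm_of_nonneg (cos_arctan_pos u).le]

theorem differentiableWithinAt_norm_ellipse_Ioi (t : ℝ) :
    DifferentiableWithinAt ℝ (‖ellipse e₁ e₂ ·‖) (Ioi t) t := by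
  have hline := ((convexOn_norm_add_smul (ellipse e₁ e₂ t) (ellipse e₁ e₂ (t + π / 2))
    ).hasDerivWithinAt_rightDeriv_of_mem_interior (x := t - t) (by simp)).comp (h := (· - t)) t
    ((hasDerivAt_id' t).sub_const t).hasDerivWithinAt (fun x hx ↦ sub_lt_sub_right hx t)
  exact ((hasDerivAt_ellipse t).hasDerivWithinAt_norm_of_line hline).differentiableWithinAt

theorem differentiableWithinAt_norm_ellipse_Iio (t : ℝ) :
    DifferentiableWithinAt ℝ (‖ellipse e₁ e₂ ·‖) (Iio t) t := by
  have hline := ((convexOn_norm_add_smul (ellipse e₁ e₂ t) (ellipse e₁ e₂ (t + π / 2))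
    ).hasDerivWithinAt_leftDeriv_of_mem_interior (x := t - t) (by simp)).comp (h := (· - t)) t
    ((hasDerivAt_id' t).sub_const t).hasDerivWithinAt (fun x hx ↦ sub_lt_sub_right hx t)
  exact ((hasDerivAt_ellipse t).hasDerivWithinAt_norm_of_line hline).differentiableWithinAt

theorem cos_arctan_mul_add_sin_arctan_mul_norm_ellipse {S T : Set ℝ} {n d : ℝ} (t₀ u : ℝ)
    (hN : HasDerivWithinAt (‖ellipse e₁ e₂ ·‖) n S (t₀ + arctan u))
    (hline : HasDerivWithinAt (fun u ↦ ‖ellipse e₁ e₂ t₀ + u • ellipse e₁ e₂ (t₀ + π / 2)‖) d T u)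
    (hTS : MapsTo (t₀ + arctan ·) T S) (hT : UniqueDiffWithinAt ℝ T u) :
    cos (arctan u) * n + sin (arctan u) * ‖ellipse e₁ e₂ (t₀ + arctan u)‖ = d := by
  -- differentiate `norm_ellipse_add_arctan` in `u`; note `arctan' u = cos (arctan u) ^ 2`
  have hcomp := hN.comp u ((hasDerivAt_arctan u).const_add t₀).hasDerivWithinAt hTS
  have hprod := (hasDerivAt_arctan u).cos.hasDerivWithinAt.fun_mul hline
  rw [show (‖ellipse e₁ e₂ ·‖) ∘ (t₀ + arctan ·) = _ from funext (norm_ellipse_add_arctan t₀)]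
    at hcomp
  have heq := hT.eq_deriv _ hcomp hprod
  have hc2 := cos_sq_arctan u
  rw [norm_ellipse_add_arctan]
  generalize ‖ellipse e₁ e₂ t₀ + u • ellipse e₁ e₂ (t₀ + π / 2)‖ = g at heq ⊢
  field_simp at heq hc2
  linear_combination cos (arctan u) * heq + d * hc2

theorem rightDeriv_norm_ellipse_add_arctan (t₀ u : ℝ) :
    cos (arctan u) * derivWithin (‖ellipse e₁ e₂ ·‖) (Ioi (t₀ + arctan u)) (t₀ + arctan u)
      + sin (arctan u) * ‖ellipse e₁ e₂ (t₀ + arctan u)‖ =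
    derivWithin (fun u ↦ ‖ellipse e₁ e₂ t₀ + u • ellipse e₁ e₂ (t₀ + π / 2)‖) (Ioi u) u :=
  cos_arctan_mul_add_sin_arctan_mul_norm_ellipse t₀ u
    (differentiableWithinAt_norm_ellipse_Ioi _).hasDerivWithinAt
    ((convexOn_norm_add_smul _ _).hasDerivWithinAt_rightDeriv_of_mem_interior (by simp))
    (fun _ hx ↦ add_lt_add_right (arctan_strictMono hx) t₀) (uniqueDiffWithinAt_Ioi u)

theorem leftDeriv_norm_ellipse_add_arctan (t₀ u : ℝ) :
    cos (arctan u) * derivWithin (‖ellipse e₁ e₂ ·‖) (Iio (t₀ + arctan u)) (t₀ + arctan u)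
      + sin (arctan u) * ‖ellipse e₁ e₂ (t₀ + arctan u)‖ =
    derivWithin (fun u ↦ ‖ellipse e₁ e₂ t₀ + u • ellipse e₁ e₂ (t₀ + π / 2)‖) (Iio u) u :=
  cos_arctan_mul_add_sin_arctan_mul_norm_ellipse t₀ u
    (differentiableWithinAt_norm_ellipse_Iio _).hasDerivWithinAt
    ((convexOn_norm_add_smul _ _).hasDerivWithinAt_leftDeriv_of_mem_interior (by simp))
    (fun _ hx ↦ add_lt_add_right (arctan_strictMono hx) t₀) (uniqueDiffWithinAt_Iio u)

theorem tendsto_rightDeriv_norm_ellipse_of_tendsto {t₀ c : ℝ} {l : Filter ℝ} (hl : l ≤ 𝓝 t₀)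
    (h : Tendsto (fun x ↦ derivWithin
      (fun u ↦ ‖ellipse e₁ e₂ t₀ + u • ellipse e₁ e₂ (t₀ + π / 2)‖)
      (Ioi (tan (x - t₀))) (tan (x - t₀))) l (𝓝 c)) :
    Tendsto (fun x ↦ derivWithin (‖ellipse e₁ e₂ ·‖) (Ioi x) x) l (𝓝 c) := by
  have hsin : Continuous fun x ↦ sin (x - t₀) * ‖ellipse e₁ e₂ x‖ :=
    (continuous_sin.comp (continuous_sub_right t₀)).mul continuous_ellipse.norm
  have hcos : Continuous fun x ↦ cos (x - t₀) := continuous_cos.comp (continuous_sub_right t₀)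
  have hlim := (h.sub ((hsin.tendsto t₀).mono_left hl)).div ((hcos.tendsto t₀).mono_left hl)
    (by simp)
  simp only [sub_self, sin_zero, cos_zero, zero_mul, sub_zero, div_one] at hlim
  refine hlim.congr' ?_
  filter_upwards [hl (Ioo_mem_nhds (by linarith [pi_pos] : t₀ - π / 2 < t₀)
    (by linarith [pi_pos] : t₀ < t₀ + π / 2))] with x hx
  have hθ : x - t₀ ∈ Ioo (-(π / 2)) (π / 2) := ⟨by linarith [hx.1], by linarith [hx.2]⟩
  have key := rightDeriv_norm_ellipse_add_arctan (e₁ := e₁) (e₂ := e₂) t₀ (tan (x - t₀))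
  rw [arctan_tan hθ.1 hθ.2, add_sub_cancel] at key
  rw [Pi.div_apply, ← key, add_sub_cancel_right, mul_div_cancel_left₀ _ (cos_pos_of_mem_Ioo hθ).ne']

theorem tendsto_rightDeriv_norm_ellipse_nhdsGT (t₀ : ℝ) :
    Tendsto (fun x ↦ derivWithin (‖ellipse e₁ e₂ ·‖) (Ioi x) x) (𝓝[>] t₀)
      (𝓝 (derivWithin (‖ellipse e₁ e₂ ·‖) (Ioi t₀) t₀)) := by
  have h₀ := rightDeriv_norm_ellipse_add_arctan (e₁ := e₁) (e₂ := e₂) t₀ 0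
  simp only [arctan_zero, add_zero, cos_zero, sin_zero, one_mul, zero_mul] at h₀
  rw [h₀]
  exact tendsto_rightDeriv_norm_ellipse_of_tendsto nhdsWithin_le_nhds
    (((convexOn_norm_add_smul _ _).tendsto_rightDeriv_nhdsGT (by simp)).comp
      (tendsto_tan_sub_nhdsGT t₀))

theorem tendsto_rightDeriv_norm_ellipse_nhdsLT (t₀ : ℝ) :
    Tendsto (fun x ↦ derivWithin (‖ellipse e₁ e₂ ·‖) (Ioi x) x) (𝓝[<] t₀)
      (𝓝 (derivWithin (‖ellipse e₁ e₂ ·‖) (Iio t₀) t₀)) := by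
  have h₀ := leftDeriv_norm_ellipse_add_arctan (e₁ := e₁) (e₂ := e₂) t₀ 0
  simp only [arctan_zero, add_zero, cos_zero, sin_zero, one_mul, zero_mul] at h₀
  rw [h₀]
  exact tendsto_rightDeriv_norm_ellipse_of_tendsto nhdsWithin_le_nhds
    (((convexOn_norm_add_smul _ _).tendsto_rightDeriv_nhdsLT (by simp)).comp
      (tendsto_tan_sub_nhdsLT t₀))

theorem countable_leftDeriv_ne_rightDeriv_norm_ellipse :
    {t | derivWithin (‖ellipse e₁ e₂ ·‖) (Iio t) t ≠
      derivWithin (‖ellipse e₁ e₂ ·‖) (Ioi t) t}.Countable := by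
  refine (countable_iUnion fun k : ℤ ↦ ((convexOn_norm_add_smul (ellipse e₁ e₂ k)
    (ellipse e₁ e₂ (k + π / 2))).countable_leftDeriv_ne_rightDeriv.image (k + arctan ·))).mono ?_
  intro t ht
  have hround := abs_le.1 (abs_sub_round t)
  have hθ : t - round t ∈ Ioo (-(π / 2)) (π / 2) :=
    ⟨by linarith [pi_gt_three], by linarith [pi_gt_three]⟩
  have hr := rightDeriv_norm_ellipse_add_arctan (e₁ := e₁) (e₂ := e₂) (round t) (tan (t - round t))
  have hl := leftDeriv_norm_ellipse_add_arctan (e₁ := e₁) (e₂ := e₂) (round t) (tan (t - round t))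
  rw [arctan_tan hθ.1 hθ.2, add_sub_cancel] at hr hl
  refine mem_iUnion.2 ⟨round t, tan (t - round t), ⟨by simp, fun heq ↦ ht ?_⟩, ?_⟩
  · exact mul_left_cancel₀ (cos_pos_of_mem_Ioo hθ).ne' (by linarith)
  · simp only [arctan_tan hθ.1 hθ.2, add_sub_cancel]

theorem abs_rightDeriv_norm_ellipse_le (t : ℝ) :
    |derivWithin (‖ellipse e₁ e₂ ·‖) (Ioi t) t| ≤ ‖ellipse e₁ e₂ (t + π / 2)‖ :=
  abs_le_norm_of_hasDerivWithinAt_norm (hasDerivAt_ellipse t)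
    (differentiableWithinAt_norm_ellipse_Ioi t).hasDerivWithinAt

end Ellipse

noncomputable def polarParam (e₁ e₂ : E) (t : ℝ) : E := ‖ellipse e₁ e₂ t‖⁻¹ • ellipse e₁ e₂ t

/-- `n` stands for a one-sided derivative of `‖ellipse e₁ e₂ ·‖` at `t`. -/
noncomputable def polarParamDeriv (e₁ e₂ : E) (t n : ℝ) : E :=
  ‖ellipse e₁ e₂ t‖⁻¹ • ellipse e₁ e₂ (t + π / 2) - (n / ‖ellipse e₁ e₂ t‖ ^ 2) • ellipse e₁ e₂ t

section PolarParam

variable {e₁ e₂ : E}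

theorem polarParam_antiperiodic : Function.Antiperiodic (polarParam e₁ e₂) π := fun t ↦ by
  simp only [polarParam, ellipse_add_pi, norm_neg, smul_neg]

variable (hInd : LinearIndependent ℝ ![e₁, e₂])
include hInd

theorem hasDerivWithinAt_polarParam {s : Set ℝ} {t n : ℝ}
    (hn : HasDerivWithinAt (‖ellipse e₁ e₂ ·‖) n s t) :
    HasDerivWithinAt (polarParam e₁ e₂) (polarParamDeriv e₁ e₂ t n) s t := by
  refine ((hn.inv (norm_ne_zero_iff.2 (ellipse_ne_zero hInd t))).smul
    (hasDerivAt_ellipse t).hasDerivWithinAt).congr_deriv ?_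
  rw [polarParamDeriv, Pi.inv_apply, neg_div, neg_smul, sub_eq_add_neg]

theorem polarParamDeriv_ne_zero (t n : ℝ) : polarParamDeriv e₁ e₂ t n ≠ 0 := fun h ↦
  inv_ne_zero (norm_ne_zero_iff.2 (ellipse_ne_zero hInd t))
    (LinearIndependent.pair_iff.1 (linearIndependent_ellipse hInd t)
      (-(n / ‖ellipse e₁ e₂ t‖ ^ 2)) ‖ellipse e₁ e₂ t‖⁻¹ (by rw [← h, polarParamDeriv]; module)).2

theorem continuous_polarParamDeriv :
    Continuous fun q : ℝ × ℝ ↦ polarParamDeriv e₁ e₂ q.1 q.2 := by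
  have hN : Continuous fun q : ℝ × ℝ ↦ ‖ellipse e₁ e₂ q.1‖ :=
    continuous_ellipse.norm.comp continuous_fst
  have hN₀ (q : ℝ × ℝ) : ‖ellipse e₁ e₂ q.1‖ ≠ 0 := norm_ne_zero_iff.2 (ellipse_ne_zero hInd q.1)
  exact ((hN.inv₀ hN₀).smul (continuous_ellipse.comp (continuous_fst.add continuous_const))).sub
    ((continuous_snd.div (hN.pow 2) fun q ↦ pow_ne_zero 2 (hN₀ q)).smul
      (continuous_ellipse.comp continuous_fst))

theorem tendsto_polarParamDeriv {l : Filter ℝ} {t c : ℝ} {n : ℝ → ℝ} (hl : l ≤ 𝓝 t)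
    (hn : Tendsto n l (𝓝 c)) :
    Tendsto (fun x ↦ polarParamDeriv e₁ e₂ x (n x)) l (𝓝 (polarParamDeriv e₁ e₂ t c)) := by
  have hpair : Tendsto (fun x ↦ (x, n x)) l (𝓝 (t, c)) := (tendsto_id.mono_left hl).prodMk_nhds hn
  have h := ((continuous_polarParamDeriv hInd).tendsto (t, c)).comp hpair
  simp only [Function.comp_def] at h
  exact h

theorem norm_polarParamDeriv_le (t n : ℝ) :
    ‖polarParamDeriv e₁ e₂ t n‖ ≤ (‖ellipse e₁ e₂ (t + π / 2)‖ + |n|) / ‖ellipse e₁ e₂ t‖ := by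
  have hN := norm_pos_iff.2 (ellipse_ne_zero hInd t)
  refine (norm_sub_le _ _).trans_eq ?_
  rw [norm_smul, norm_smul, norm_inv, norm_norm, norm_div, norm_pow, norm_norm, Real.norm_eq_abs]
  field_simp

theorem derivWithin_polarParam_Ici (t : ℝ) :
    derivWithin (polarParam e₁ e₂) (Ici t) t =
      polarParamDeriv e₁ e₂ t (derivWithin (‖ellipse e₁ e₂ ·‖) (Ioi t) t) :=
  (hasDerivWithinAt_polarParam hInd (differentiableWithinAt_norm_ellipse_Ioi t).hasDerivWithinAt
    |>.Ici_of_Ioi).derivWithin (uniqueDiffWithinAt_Ici t)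

theorem derivWithin_polarParam_Iic (t : ℝ) :
    derivWithin (polarParam e₁ e₂) (Iic t) t =
      polarParamDeriv e₁ e₂ t (derivWithin (‖ellipse e₁ e₂ ·‖) (Iio t) t) :=
  (hasDerivWithinAt_polarParam hInd (differentiableWithinAt_norm_ellipse_Iio t).hasDerivWithinAt
    |>.Iic_of_Iio).derivWithin (uniqueDiffWithinAt_Iic t)

theorem countable_derivWithin_polarParam_Iic_ne_Ici :
    {t | derivWithin (polarParam e₁ e₂) (Iic t) t ≠
      derivWithin (polarParam e₁ e₂) (Ici t) t}.Countable :=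
  (countable_leftDeriv_ne_rightDeriv_norm_ellipse (e₁ := e₁) (e₂ := e₂)).mono fun t ht ↦
    show _ ≠ _ from fun heq ↦
      ht (by rw [derivWithin_polarParam_Ici hInd, derivWithin_polarParam_Iic hInd, heq])

theorem isOneSidedRegularCurve_polarParam [CompleteSpace E] :
    IsOneSidedRegularCurve (polarParam e₁ e₂) where
  differentiableWithinAt_Ici t := (hasDerivWithinAt_polarParam hInd
    (differentiableWithinAt_norm_ellipse_Ioi t).hasDerivWithinAt.Ici_of_Ioi).differentiableWithinAt
  differentiableWithinAt_Iic t := (hasDerivWithinAt_polarParam hInd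
    (differentiableWithinAt_norm_ellipse_Iio t).hasDerivWithinAt.Iic_of_Iio).differentiableWithinAt
  derivWithin_Ici_ne_zero t := by
    rw [derivWithin_polarParam_Ici hInd]
    exact polarParamDeriv_ne_zero hInd _ _
  derivWithin_Iic_ne_zero t := by
    rw [derivWithin_polarParam_Iic hInd]
    exact polarParamDeriv_ne_zero hInd _ _
  tendsto_derivWithin_Ici_nhdsGT t := by
    simp only [derivWithin_polarParam_Ici hInd]
    exact tendsto_polarParamDeriv hInd nhdsWithin_le_nhds (tendsto_rightDeriv_norm_ellipse_nhdsGT t)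
  tendsto_derivWithin_Ici_nhdsLT t := by
    simp only [derivWithin_polarParam_Ici hInd, derivWithin_polarParam_Iic hInd]
    exact tendsto_polarParamDeriv hInd nhdsWithin_le_nhds (tendsto_rightDeriv_norm_ellipse_nhdsLT t)
  intervalIntegrable a b := by
    have hbound : Continuous fun x ↦ 2 * ‖ellipse e₁ e₂ (x + π / 2)‖ / ‖ellipse e₁ e₂ x‖ :=
      (continuous_const.mul (continuous_ellipse.comp (continuous_add_const _)).norm).div
        continuous_ellipse.norm fun x ↦ norm_ne_zero_iff.2 (ellipse_ne_zero hInd x)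
    refine (hbound.intervalIntegrable a b).mono_fun'
      (stronglyMeasurable_derivWithin_Ici _).norm.aestronglyMeasurable (ae_of_all _ fun x ↦ ?_)
    dsimp only
    rw [norm_norm, derivWithin_polarParam_Ici hInd]
    refine (norm_polarParamDeriv_le hInd _ _).trans (div_le_div_of_nonneg_right ?_ (norm_nonneg _))
    linarith [abs_rightDeriv_norm_ellipse_le (e₁ := e₁) (e₂ := e₂) x]

end PolarParam

end

theorem natural_parameterization_properties_general
    {X : Type*} [NormedAddCommGroup X] [NormedSpace ℝ X] [CompleteSpace X]
    (e₁ e₂ : X) (hInd : LinearIndependent ℝ ![e₁, e₂])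
    (p : ℝ → X)
    (hp : ∀ t, p t = ‖Real.cos t • e₁ + Real.sin t • e₂‖⁻¹ •
      (Real.cos t • e₁ + Real.sin t • e₂))
    (σ : ℝ → ℝ) (hσ : ∀ t, σ t = ∫ u in (0:ℝ)..t, ‖derivWithin p (Ici u) u‖)
    (τ : ℝ → ℝ) (hτ_cont : Continuous τ) (hτ_mono : StrictMono τ)
    (hστ : ∀ x, σ (τ x) = x)
    (r : ℝ → X) (hr : ∀ s, r s = p (τ s))
    (L : ℝ) (hL : L = σ Real.pi) :
    (∀ s : ℝ, r (s + L) = -r s) ∧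
    (∀ s : ℝ, (∃ d : X, HasDerivWithinAt r d (Iic s) s) ∧
      (∃ d : X, HasDerivWithinAt r d (Ici s) s)) ∧
    {s : ℝ | derivWithin r (Iic s) s ≠ derivWithin r (Ici s) s}.Countable ∧
    (∀ s s' : ℝ, ‖r s - r s'‖ ≤ |s - s'|) ∧
    (∀ s : ℝ, ‖derivWithin r (Iic s) s‖ = 1 ∧ ‖derivWithin r (Ici s) s‖ = 1) := by
  obtain rfl : p = polarParam e₁ e₂ := funext hp
  obtain rfl : σ = arcLength (polarParam e₁ e₂) := funext hσ
  obtain rfl : r = polarParam e₁ e₂ ∘ τ := funext hr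
  have hreg := isOneSidedRegularCurve_polarParam hInd
  refine ⟨fun s ↦ ?_, fun s ↦ ⟨⟨_, hreg.hasDerivWithinAt_comp_Iic hτ_mono hστ hτ_cont s⟩,
      ⟨_, hreg.hasDerivWithinAt_comp_Ici hτ_mono hστ hτ_cont s⟩⟩,
    hreg.countable_derivWithin_comp_Iic_ne_Ici hτ_mono hστ hτ_cont
      (countable_derivWithin_polarParam_Iic_ne_Ici hInd),
    fun s s' ↦ ?_, fun s ↦ ⟨hreg.norm_derivWithin_comp_Iic hτ_mono hστ hτ_cont s,
      hreg.norm_derivWithin_comp_Ici hτ_mono hστ hτ_cont s⟩⟩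
  · have hτ_add : τ (s + L) = τ s + π := hreg.strictMono_arcLength.injective <| by
      rw [hστ, hreg.arcLength_add_of_antiperiodic polarParam_antiperiodic, hστ, hL]
    rw [Function.comp_apply, hτ_add, polarParam_antiperiodic, Function.comp_apply]
  · simpa [dist_eq_norm, Real.dist_eq] using
      (hreg.lipschitzWith_comp hτ_mono hστ).dist_le_mul s s'

/-- Properties of the natural parameterization `r = p ∘ τ` of the unit sphere of a
2-dimensional real Banach space: antipodality `r (s + L) = -r s`, existence of one-sided
derivatives, countability of the set of points where they differ, the non-expanding
property, and unit norm of the one-sided derivatives. -/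
theorem natural_parameterization_properties
    {X : Type*} [NormedAddCommGroup X] [NormedSpace ℝ X] [CompleteSpace X]
    (hdim : Module.finrank ℝ X = 2)
    (e₁ e₂ : X) (hInd : LinearIndependent ℝ ![e₁, e₂])
    (p : ℝ → X)
    (hp : ∀ t, p t = ‖Real.cos t • e₁ + Real.sin t • e₂‖⁻¹ •
      (Real.cos t • e₁ + Real.sin t • e₂))
    (σ : ℝ → ℝ) (hσ : ∀ t, σ t = ∫ u in (0:ℝ)..t, ‖derivWithin p (Ici u) u‖)
    (τ : ℝ → ℝ) (hτ_cont : Continuous τ) (hτ_mono : StrictMono τ)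
    (hστ : ∀ x, σ (τ x) = x)
    (r : ℝ → X) (hr : ∀ s, r s = p (τ s))
    (L : ℝ) (hL : L = σ Real.pi) :
    (∀ s : ℝ, r (s + L) = -r s) ∧
    (∀ s : ℝ, (∃ d : X, HasDerivWithinAt r d (Iic s) s) ∧
      (∃ d : X, HasDerivWithinAt r d (Ici s) s)) ∧
    {s : ℝ | derivWithin r (Iic s) s ≠ derivWithin r (Ici s) s}.Countable ∧
    (∀ s s' : ℝ, ‖r s - r s'‖ ≤ |s - s'|) ∧
    (∀ s : ℝ, ‖derivWithin r (Iic s) s‖ = 1 ∧ ‖derivWithin r (Ici s) s‖ = 1) :=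
  natural_parameterization_properties_general e₁ e₂ hInd p hp σ hσ τ hτ_cont hτ_mono hστ r hr L hL
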